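/- Let M_0 ⊆ M_1 ⊆ … ⊆ M_ℓ be a standard ℓ-flag of R-submodules of O. Then 𝔪·M_ℓ ⊆ M_i for every 0 ≤ i ≤ ℓ. Consequently each M_i is uniquely determined by its image M_i/𝔪M_ℓ in M_ℓ/𝔪M_ℓ: if two members of such flags contain 𝔪M_ℓ and have equal images in M_ℓ/𝔪M_ℓ, they coincide. -/

import Mathlib

open PowerSeries

/-- `ν f = n` : the order of the power series `f` equals `n`. -/
def HasOrd {k : Type*} [Semiring k] (f : PowerSeries k) (n : ℕ) : Prop :=
  PowerSeries.coeff n f ≠ 0 ∧ ∀ m < n, PowerSeries.coeff m f = 0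

/-- The set of orders of the nonzero elements of `S ⊆ k[[z]]`. -/
def ValSet {k : Type*} [Semiring k] (S : Set (PowerSeries k)) : Set ℕ :=
  {n | ∃ f ∈ S, HasOrd f n}

/-- The `k`-subspace `𝔪·M` of `O = k[[z]]` spanned by products `r·f` with
`r ∈ 𝔪 = {x ∈ R | ν(x) > 0}` and `f ∈ M`. -/
noncomputable def mMul {k : Type*} [Field k] (R : Subalgebra k (PowerSeries k))
    (M : Submodule k (PowerSeries k)) : Submodule k (PowerSeries k) :=
  Submodule.span k {x | ∃ r ∈ R, PowerSeries.coeff 0 r = 0 ∧ ∃ f ∈ M, x = r * f}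

/-! Standardness and `z^m O ⊆ R` give `z^{2m} O ⊆ M_0`. Elimination of leading coefficients then
shows that `M_j = M_{j-1} + k h_j` with `ν(h_j) = g_j`, and that an element of `M_j` of order
greater than `g_j` (hence than every `g_i`, `i ≤ j`) already lies in `M_0`. For `r ∈ 𝔪` and
`f = f' + c h_j ∈ M_j`, induction on `j` puts `r f'` in `M_0`, and `ν(r h_j) > g_j` puts `r h_j`
there too. The second assertion is the correspondence between submodules containing `𝔪 M_ℓ` and
submodules of `M_ℓ / 𝔪 M_ℓ`. -/

namespace PowerSeries

section Order

variable {R : Type*} [Semiring R]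

lemma hasOrd_iff_X_pow_dvd {f : R⟦X⟧} {n : ℕ} : HasOrd f n ↔ X ^ n ∣ f ∧ coeff n f ≠ 0 := by
  rw [HasOrd, X_pow_dvd_iff, and_comm]

lemma hasOrd_X_pow [Nontrivial R] (n : ℕ) : HasOrd (X ^ n : R⟦X⟧) n :=
  hasOrd_iff_X_pow_dvd.mpr ⟨dvd_rfl, by simp [coeff_X_pow]⟩

lemma X_pow_succ_dvd_of_coeff_eq_zero {f : R⟦X⟧} {n : ℕ} (hf : X ^ n ∣ f) (h : coeff n f = 0) :
    X ^ (n + 1) ∣ f := by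
  rw [X_pow_dvd_iff] at hf ⊢
  intro i hi
  rcases Nat.lt_succ_iff_lt_or_eq.mp hi with hi | rfl
  exacts [hf i hi, h]

lemma valSet_mono {S T : Set R⟦X⟧} (h : S ⊆ T) : ValSet S ⊆ ValSet T :=
  fun _ ⟨f, hf, hfn⟩ => ⟨f, h hf, hfn⟩

end Order

variable {k : Type*} [Field k]

/-- Elimination of leading coefficients, one degree at a time from `n` up to `N`. -/
theorem mem_of_X_pow_dvd_of_valSet {S T : Submodule k k⟦X⟧} (hST : S ≤ T) {N : ℕ}
    (hN : ∀ x, X ^ N ∣ x → x ∈ S) {n : ℕ}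
    (hval : ∀ d ∈ ValSet (T : Set k⟦X⟧), n ≤ d → d ∈ ValSet (S : Set k⟦X⟧))
    {x : k⟦X⟧} (hxT : x ∈ T) (hx : X ^ n ∣ x) : x ∈ S := by
  induction hd : N - n generalizing n x with
  | zero => exact hN x ((pow_dvd_pow X (by omega)).trans hx)
  | succ d ih =>
    have hval' : ∀ d ∈ ValSet (T : Set k⟦X⟧), n + 1 ≤ d → d ∈ ValSet (S : Set k⟦X⟧) :=
      fun d hd hnd => hval d hd (by omega)
    by_cases hc : coeff n x = 0
    · exact ih hval' hxT (X_pow_succ_dvd_of_coeff_eq_zero hx hc) (by omega)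
    · obtain ⟨s, hsS, hs⟩ := hval n ⟨x, hxT, hasOrd_iff_X_pow_dvd.mpr ⟨hx, hc⟩⟩ le_rfl
      rw [hasOrd_iff_X_pow_dvd] at hs
      set c := coeff n x / coeff n s
      have hxs : x - c • s ∈ S := by
        refine ih hval' (T.sub_mem hxT (T.smul_mem c (hST hsS))) ?_ (by omega)
        have hcs : X ^ n ∣ c • s := by
          rw [smul_eq_C_mul]
          exact hs.1.mul_left _
        refine X_pow_succ_dvd_of_coeff_eq_zero (dvd_sub hx hcs) ?_
        simp [c, div_mul_cancel₀ _ hs.2]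
      simpa using S.add_mem hxs (S.smul_mem c hsS)

theorem le_sup_span_singleton_of_valSet {S T : Submodule k k⟦X⟧} (hST : S ≤ T) {N : ℕ}
    (hN : ∀ x, X ^ N ∣ x → x ∈ S) {g : ℕ}
    (hval : ValSet (T : Set k⟦X⟧) ⊆ ValSet (S : Set k⟦X⟧) ∪ {g})
    {h : k⟦X⟧} (hhT : h ∈ T) (hh : HasOrd h g) : T ≤ S ⊔ k ∙ h := by
  intro x hx
  have hS'T : S ⊔ k ∙ h ≤ T := sup_le hST ((Submodule.span_singleton_le_iff_mem _ _).mpr hhT)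
  refine mem_of_X_pow_dvd_of_valSet hS'T (fun y hy => Submodule.mem_sup_left (hN y hy)) (n := 0)
    (fun d hd _ => ?_) hx (by simp)
  rcases hval hd with hdS | rfl
  · exact valSet_mono (SetLike.coe_subset_coe.mpr le_sup_left) hdS
  · exact ⟨h, Submodule.mem_sup_right (Submodule.mem_span_singleton_self h), hh⟩

theorem mem_of_X_pow_two_mul_dvd {R : Subalgebra k k⟦X⟧} {m : ℕ} (hRm : ∀ f, X ^ m * f ∈ R)
    {M : Submodule k k⟦X⟧} (hM : ∀ r ∈ R, ∀ f ∈ M, r * f ∈ M)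
    (hmM : m ∈ ValSet (M : Set k⟦X⟧)) {x : k⟦X⟧} (hx : X ^ (2 * m) ∣ x) : x ∈ M := by
  obtain ⟨f, hfM, hf⟩ := hmM
  obtain ⟨⟨u, rfl⟩, hu0⟩ := hasOrd_iff_X_pow_dvd.mp hf
  obtain ⟨w, rfl⟩ := hx
  have hu : IsUnit u := by
    rw [isUnit_iff_constantCoeff, ← coeff_zero_eq_constantCoeff_apply]
    simpa [coeff_X_pow_mul'] using hu0
  obtain ⟨v, huv⟩ := hu.exists_right_inv
  have hx : X ^ (2 * m) * w = X ^ m * (v * w) * (X ^ m * u) := by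
    linear_combination (-(X ^ (2 * m) * w)) * huv
  rw [hx]
  exact hM _ (hRm _) _ hfM

end PowerSeries

section Flag

variable {k : Type*} [Field k] {ℓ : ℕ} {M : Fin (ℓ + 1) → Submodule k k⟦X⟧} {g : Fin ℓ → ℕ}
  {N : ℕ}

theorem mem_flag_zero_of_X_pow_dvd (hmono : Monotone M) (hN : ∀ x, X ^ N ∣ x → x ∈ M 0)
    (hΔ : ∀ j : Fin ℓ, ValSet (M j.succ : Set k⟦X⟧) = ValSet (M j.castSucc : Set k⟦X⟧) ∪ {g j})
    (j : Fin (ℓ + 1)) {n : ℕ} (hgn : ∀ i : Fin ℓ, i.castSucc < j → g i < n)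
    {x : k⟦X⟧} (hxM : x ∈ M j) (hx : X ^ n ∣ x) : x ∈ M 0 := by
  induction j using Fin.induction generalizing x with
  | zero => exact hxM
  | succ j ih =>
    refine ih (fun i hi => hgn i (hi.trans Fin.castSucc_lt_succ)) ?_ hx
    refine mem_of_X_pow_dvd_of_valSet (hmono (Fin.castSucc_le_succ j))
      (fun y hy => hmono (Fin.zero_le _) (hN y hy)) (fun d hd hnd => ?_) hxM hx
    rw [hΔ j] at hd
    refine hd.resolve_right fun hdg => ?_
    have := hgn j Fin.castSucc_lt_succ
    rw [Set.mem_singleton_iff] at hdg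
    omega

theorem mul_mem_flag_zero {R : Subalgebra k k⟦X⟧} (hmono : Monotone M)
    (hN : ∀ x, X ^ N ∣ x → x ∈ M 0)
    (hΔ : ∀ j : Fin ℓ, ValSet (M j.succ : Set k⟦X⟧) = ValSet (M j.castSucc : Set k⟦X⟧) ∪ {g j})
    (hg : Monotone g) (hstab : ∀ i, ∀ r ∈ R, ∀ f ∈ M i, r * f ∈ M i)
    {r : k⟦X⟧} (hrR : r ∈ R) (hr0 : coeff 0 r = 0) (j : Fin (ℓ + 1)) {f : k⟦X⟧}
    (hf : f ∈ M j) : r * f ∈ M 0 := by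
  induction j using Fin.induction generalizing f with
  | zero => exact hstab 0 r hrR f hf
  | succ j ih =>
    obtain ⟨h, hhM, hh⟩ : g j ∈ ValSet (M j.succ : Set k⟦X⟧) := by
      rw [hΔ j]; exact Or.inr rfl
    obtain ⟨f', hf', _, hc, rfl⟩ := Submodule.mem_sup.mp <|
      le_sup_span_singleton_of_valSet (hmono (Fin.castSucc_le_succ j))
        (fun y hy => hmono (Fin.zero_le _) (hN y hy)) (hΔ j).le hhM hh hf
    obtain ⟨c, rfl⟩ := Submodule.mem_span_singleton.mp hc
    -- `r ∈ 𝔪` raises the order of `h` past `g j`, hence past every `g i` with `i ≤ j`.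
    have hrh : r * h ∈ M 0 := by
      refine mem_flag_zero_of_X_pow_dvd hmono hN hΔ j.succ (n := g j + 1) (fun i hi => ?_)
        (hstab _ r hrR h hhM) ?_
      · exact Nat.lt_succ_of_le (hg (Fin.castSucc_lt_succ_iff.mp hi))
      · rw [pow_succ']
        have hXr : X ∣ r := X_dvd_iff.mpr (by rwa [← coeff_zero_eq_constantCoeff_apply])
        exact mul_dvd_mul hXr (hasOrd_iff_X_pow_dvd.mp hh).1
    rw [mul_add, mul_smul_comm]
    exact (M 0).add_mem (ih hf') ((M 0).smul_mem c hrh)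

end Flag

theorem flag_contains_mMul_top_general
    {k : Type*} [Field k]
    (R : Subalgebra k (PowerSeries k)) (m : ℕ)
    (hRm : ∀ f : PowerSeries k, PowerSeries.X ^ m * f ∈ R)
    (ℓ : ℕ) (M : Fin (ℓ + 1) → Submodule k (PowerSeries k)) (g : Fin ℓ → ℕ)
    (hstab : ∀ i, ∀ r ∈ R, ∀ f ∈ M i, r * f ∈ M i)
    (hchain : ∀ j : Fin ℓ, M j.castSucc ≤ M j.succ)
    (hstd : ValSet (R : Set (PowerSeries k)) ⊆ ValSet (M 0 : Set (PowerSeries k)))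
    (hΔ : ∀ j : Fin ℓ,
      ValSet (M j.succ : Set (PowerSeries k))
        = ValSet (M j.castSucc : Set (PowerSeries k)) ∪ {g j})
    (hg : StrictMono g) :
    (∀ i : Fin (ℓ + 1), mMul R (M (Fin.last ℓ)) ≤ M i) ∧
    (∀ N N' : Submodule k (PowerSeries k),
      mMul R (M (Fin.last ℓ)) ≤ N → mMul R (M (Fin.last ℓ)) ≤ N' →
      N ≤ M (Fin.last ℓ) → N' ≤ M (Fin.last ℓ) →
      Submodule.map (mMul R (M (Fin.last ℓ))).mkQ N
        = Submodule.map (mMul R (M (Fin.last ℓ))).mkQ N' →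
      N = N') := by
  have hmono : Monotone M := Fin.monotone_iff_le_succ.mpr hchain
  have hXm : (X ^ m : k⟦X⟧) ∈ R := by simpa using hRm 1
  have hN : ∀ x, X ^ (2 * m) ∣ x → x ∈ M 0 := fun x =>
    mem_of_X_pow_two_mul_dvd hRm (hstab 0) (hstd ⟨_, hXm, hasOrd_X_pow m⟩)
  refine ⟨fun i => ?_, fun P P' hP hP' _ _ heq => ?_⟩
  · rw [mMul, Submodule.span_le]
    rintro _ ⟨r, hrR, hr0, f, hf, rfl⟩
    exact hmono (Fin.zero_le i) (mul_mem_flag_zero hmono hN hΔ hg.monotone hstab hrR hr0 _ hf)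
  · simpa [Submodule.comap_map_mkQ, hP, hP'] using
      congrArg (Submodule.comap (mMul R (M (Fin.last ℓ))).mkQ) heq

/-- Let `M_0 ⊆ M_1 ⊆ … ⊆ M_ℓ` be a standard `ℓ`-flag of `R`-submodules of
`O = k[[z]]` (with `Δ_{M_i} = Δ_{M_{i-1}} ∪ {g_i}` and `g_1 < … < g_ℓ`).  Then
`𝔪·M_ℓ ⊆ M_i` for all `0 ≤ i ≤ ℓ`; consequently, members of such flags containing
`𝔪·M_ℓ` are determined by their images in `M_ℓ/𝔪M_ℓ`: if two submodules `N, N' ⊆ M_ℓ`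
contain `𝔪·M_ℓ` and have equal images in `M_ℓ/𝔪M_ℓ`, they coincide. -/
theorem flag_contains_mMul_top
    {k : Type*} [Field k]
    (R : Subalgebra k (PowerSeries k)) (m : ℕ) (hm : 1 ≤ m)
    (hRm : ∀ f : PowerSeries k, PowerSeries.X ^ m * f ∈ R)
    (ℓ : ℕ) (M : Fin (ℓ + 1) → Submodule k (PowerSeries k)) (g : Fin ℓ → ℕ)
    (hstab : ∀ i, ∀ r ∈ R, ∀ f ∈ M i, r * f ∈ M i)
    (hchain : ∀ j : Fin ℓ, M j.castSucc ≤ M j.succ)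
    (hstd : ValSet (R : Set (PowerSeries k)) ⊆ ValSet (M 0 : Set (PowerSeries k)))
    (hΔ : ∀ j : Fin ℓ,
      ValSet (M j.succ : Set (PowerSeries k))
        = ValSet (M j.castSucc : Set (PowerSeries k)) ∪ {g j})
    (hg : StrictMono g) :
    (∀ i : Fin (ℓ + 1), mMul R (M (Fin.last ℓ)) ≤ M i) ∧
    (∀ N N' : Submodule k (PowerSeries k),
      mMul R (M (Fin.last ℓ)) ≤ N → mMul R (M (Fin.last ℓ)) ≤ N' →
      N ≤ M (Fin.last ℓ) → N' ≤ M (Fin.last ℓ) →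
      Submodule.map (mMul R (M (Fin.last ℓ))).mkQ N
        = Submodule.map (mMul R (M (Fin.last ℓ))).mkQ N' →
      N = N') :=
  flag_contains_mMul_top_general R m hRm ℓ M g hstab hchain hstd hΔ hg
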